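/- arXiv:2506.02638 — 3 statements merged into one kernel-verified Lean document; each statement's English description precedes it below -/
import Mathlib

section
/- Let R be a commutative ring, and in SL₂(R) define L(x) = [[1,0],[x,1]], U(y) = [[1,y],[0,1]], T(a) = [[a,0],[0,a⁻¹]] for a ∈ Rˣ, and n = [[0,1],[-1,0]]. Let x, y ∈ R and a ∈ Rˣ, and suppose D := a⁻² + x·y is a unit of R. Then n · (L(x) · T(a) · U(y)) · n⁻¹ = L(-y/D) · T(D·a) · U(-x/D). -/
open Matrix MatrixGroups

variable {R : Type*} [CommRing R]

/-- `L x = [[1,0],[x,1]]` in `SL₂(R)`. -/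
def L (x : R) : SL(2, R) := ⟨!![1, 0; x, 1], by simp [Matrix.det_fin_two_of]⟩

/-- `U y = [[1,y],[0,1]]` in `SL₂(R)`. -/
def U (y : R) : SL(2, R) := ⟨!![1, y; 0, 1], by simp [Matrix.det_fin_two_of]⟩

/-- `T a = [[a,0],[0,a⁻¹]]` in `SL₂(R)` for a unit `a`. -/
def T (a : Rˣ) : SL(2, R) := ⟨!![(a : R), 0; 0, (↑a⁻¹ : R)], by simp [Matrix.det_fin_two_of]⟩

/-- `n = [[0,1],[-1,0]]` in `SL₂(R)`. -/
def n : SL(2, R) := ⟨!![0, 1; -1, 0], by simp [Matrix.det_fin_two_of]⟩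

/-- Conjugation by `n` of a big-cell element, when `D = a⁻² + x y` is a unit. -/
theorem stmt_0 (x y : R) (a D : Rˣ) (hD : (D : R) = (↑a⁻¹ : R) ^ 2 + x * y) :
    n * (L x * T a * U y) * n⁻¹ =
      L (-y * (↑D⁻¹ : R)) * T (D * a) * U (-x * (↑D⁻¹ : R)) := by
  rw [mul_inv_eq_iff_eq_mul]
  have ha : (a : R) * (↑a⁻¹ : R) = 1 := by
    rw [← Units.val_mul, mul_inv_cancel, Units.val_one]
  have hDinv : (D : R) * (↑D⁻¹ : R) = 1 := by
    rw [← Units.val_mul, mul_inv_cancel, Units.val_one]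
  ext i j
  fin_cases i <;> fin_cases j <;>
    simp only [Matrix.SpecialLinearGroup.coe_mul] <;>
    simp [L, U, T, n, Matrix.mul_apply, Fin.sum_univ_succ, Units.val_mul]
  · linear_combination -x * (↑a : R) * hDinv
  · linear_combination (-(↑a⁻¹ : R)) * ha - (↑a : R) * hD
  · linear_combination (-(↑a : R) * (↑D⁻¹ : R)) * hD
      + ((↑a : R) * (↑D⁻¹ : R) * y * x + (↑a : R)) * hDinv - (↑D⁻¹ : R) * (↑a⁻¹ : R) * ha
  · linear_combination -(↑a : R) * y * hDinv
end

section
/- (Gordan's lemma) Let M ≅ ℤⁿ be a lattice and let σ ⊆ M ⊗ ℝ be a rational polyhedral cone, i.e. σ = ℝ≥0·x₁ + ⋯ + ℝ≥0·x_p for finitely many x₁, …, x_p ∈ M. Then the monoid σ ∩ M is finitely generated. -/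
open scoped BigOperators

private lemma gordan_sum_ite_smul {k : ℕ} {α : Type*} [AddCommMonoid α] [DecidableEq α]
    (gen : Fin k → α) (hinj : Function.Injective gen) (t₀ : Fin k) (n : ℕ) :
    ∑ t, (if gen t = gen t₀ then n else 0) • gen t = n • gen t₀ := by
  rw [Finset.sum_eq_single_of_mem t₀ (Finset.mem_univ _)]
  · simp
  · intro t _ ht
    rw [if_neg (fun h => ht (hinj h)), zero_smul]

/-- Gordan's lemma: for a rational polyhedral cone `σ ⊆ ℝⁿ` generated by finitely many
lattice vectors, the monoid `σ ∩ ℤⁿ` is finitely generated. -/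
theorem stmt_4 (d : ℕ) (σ : Set (Fin d → ℝ)) (p : ℕ) (x : Fin p → (Fin d → ℤ))
    (hσ : σ = {v | ∃ c : Fin p → ℝ, (∀ i, 0 ≤ c i) ∧
      v = ∑ i, c i • (fun j => ((x i j : ℝ)))}) :
    ∃ (k : ℕ) (gen : Fin k → (Fin d → ℤ)),
      (∀ i, (fun j => ((gen i j : ℝ))) ∈ σ) ∧
      ∀ m : Fin d → ℤ, (fun j => ((m j : ℝ))) ∈ σ →
        ∃ c : Fin k → ℕ, m = ∑ i, c i • gen i := by
  classical
  -- membership in σ is equivalent to a coordinatewise formula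
  have hmemσ : ∀ (m : Fin d → ℤ), (fun j => ((m j : ℝ))) ∈ σ ↔
      ∃ c : Fin p → ℝ, (∀ i, 0 ≤ c i) ∧ ∀ j, (m j : ℝ) = ∑ i, c i * (x i j : ℝ) := by
    intro m
    rw [hσ]
    constructor
    · rintro ⟨c, hc, hv⟩
      exact ⟨c, hc, fun j => by
        have := congrFun hv j
        simpa [Finset.sum_apply] using this⟩
    · rintro ⟨c, hc, hv⟩
      refine ⟨c, hc, funext fun j => ?_⟩
      simpa [Finset.sum_apply] using hv j
  -- the box predicate
  set mK : (Fin d → ℤ) → Prop := fun m => ∃ t : Fin p → ℝ,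
      (∀ i, 0 ≤ t i ∧ t i ≤ 1) ∧ ∀ j, (m j : ℝ) = ∑ i, t i * (x i j : ℝ) with hmKdef
  set B : Fin d → ℤ := fun j => ∑ i, |x i j| with hBdef
  -- the generating set
  set G : Finset (Fin d → ℤ) := (Finset.Icc (-B) B).filter mK with hGdef
  have hGmem : ∀ m, mK m → m ∈ G := by
    intro m hm
    refine Finset.mem_filter.mpr ⟨?_, hm⟩
    obtain ⟨t, ht, hv⟩ := hm
    rw [Finset.mem_Icc]
    have key : ∀ j, |m j| ≤ B j := by
      intro j
      have habs : |(m j : ℝ)| ≤ (B j : ℝ) := by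
        rw [hv j]
        calc |∑ i, t i * (x i j : ℝ)| ≤ ∑ i, |t i * (x i j : ℝ)| :=
              Finset.abs_sum_le_sum_abs _ _
          _ ≤ ∑ i, |(x i j : ℝ)| := by
              refine Finset.sum_le_sum fun i _ => ?_
              rw [abs_mul]
              calc |t i| * |(x i j : ℝ)| ≤ 1 * |(x i j : ℝ)| := by
                    refine mul_le_mul_of_nonneg_right ?_ (abs_nonneg _)
                    rw [abs_le]; exact ⟨le_trans (by norm_num) (ht i).1, (ht i).2⟩
                _ = |(x i j : ℝ)| := one_mul _
          _ = (B j : ℝ) := by rw [hBdef]; push_cast; rfl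
      rw [show |(m j : ℝ)| = ((|m j| : ℤ) : ℝ) by push_cast; rfl] at habs
      exact_mod_cast habs
    constructor
    · intro j
      have := (abs_le.mp (key j)).1
      simpa using this
    · intro j
      exact (abs_le.mp (key j)).2
  have hGσ : ∀ m ∈ G, (fun j => ((m j : ℝ))) ∈ σ := by
    intro m hm
    obtain ⟨t, ht, hv⟩ := (Finset.mem_filter.mp hm).2
    exact (hmemσ m).mpr ⟨t, fun i => (ht i).1, hv⟩
  -- each x i is in G
  have hxG : ∀ i, x i ∈ G := by
    intro i
    refine hGmem _ ⟨fun l => if l = i then 1 else 0, ?_, ?_⟩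
    · intro l; by_cases h : l = i <;> simp [h]
    · intro j
      rw [Finset.sum_eq_single i]
      · simp
      · intro l _ hl; simp [hl]
      · simp
  -- enumeration of G
  set k := G.card with hk
  set e := G.equivFin with he
  set gen : Fin k → (Fin d → ℤ) := fun t => ((e.symm t : G) : Fin d → ℤ) with hgen
  have hgeninj : Function.Injective gen := by
    intro a b h
    have : (e.symm a : G) = (e.symm b : G) := Subtype.ext h
    exact e.symm.injective this
  have hgensurj : ∀ g ∈ G, ∃ t, gen t = g := fun g hg => ⟨e ⟨g, hg⟩, by simp [hgen]⟩
  refine ⟨k, gen, fun t => hGσ _ (e.symm t).2, ?_⟩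
  intro m hm
  obtain ⟨c, hc, hv⟩ := (hmemσ m).mp hm
  -- integer parts
  set n : Fin p → ℕ := fun i => (⌊c i⌋).toNat with hn
  have hnc : ∀ i, ((n i : ℤ) : ℝ) = (⌊c i⌋ : ℝ) := by
    intro i
    rw [hn]
    norm_cast
    exact Int.toNat_of_nonneg (Int.floor_nonneg.mpr (hc i))
  -- remainder
  set r : Fin d → ℤ := m - ∑ i, (n i : ℤ) • x i with hr
  have hrG : r ∈ G := by
    refine hGmem _ ⟨fun i => Int.fract (c i), fun i => ⟨Int.fract_nonneg _, (Int.fract_lt_one _).le⟩, ?_⟩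
    intro j
    have hrj : ((r j : ℤ) : ℝ) = (m j : ℝ) - ∑ i, ((n i : ℤ) : ℝ) * (x i j : ℝ) := by
      rw [hr]; push_cast [Finset.sum_apply]; ring_nf
      simp [mul_comm]
    rw [hrj, hv j, ← Finset.sum_sub_distrib]
    refine Finset.sum_congr rfl fun i _ => ?_
    rw [hnc i]
    simp only [← Int.self_sub_floor]
    ring
  have hmr : m = (∑ i, n i • x i) + r := by
    rw [hr]
    ext j
    simp [Finset.sum_apply]
  -- indices
  obtain ⟨t₀, ht₀⟩ := hgensurj r hrG
  choose tx htx using fun i => hgensurj (x i) (hxG i)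
  refine ⟨fun t => (∑ i, if gen t = gen (tx i) then n i else 0) +
      (if gen t = gen t₀ then 1 else 0), ?_⟩
  have h1 : ∑ t, (if gen t = gen t₀ then (1:ℕ) else 0) • gen t = r := by
    rw [gordan_sum_ite_smul gen hgeninj t₀ 1, one_smul, ht₀]
  have h2 : ∑ t, (∑ i, if gen t = gen (tx i) then n i else 0) • gen t = ∑ i, n i • x i := by
    calc ∑ t, (∑ i, if gen t = gen (tx i) then n i else 0) • gen t
        = ∑ t, ∑ i, (if gen t = gen (tx i) then n i else 0) • gen t := by
          refine Finset.sum_congr rfl fun t _ => ?_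
          rw [Finset.sum_smul]
      _ = ∑ i, ∑ t, (if gen t = gen (tx i) then n i else 0) • gen t := Finset.sum_comm
      _ = ∑ i, n i • x i := by
          refine Finset.sum_congr rfl fun i _ => ?_
          rw [gordan_sum_ite_smul gen hgeninj (tx i) (n i), htx i]
  calc m = (∑ i, n i • x i) + r := hmr
    _ = ∑ t, ((∑ i, if gen t = gen (tx i) then n i else 0) +
        (if gen t = gen t₀ then 1 else 0)) • gen t := by
        rw [← h1, ← h2, ← Finset.sum_add_distrib]
        refine Finset.sum_congr rfl fun t _ => ?_
        rw [add_smul]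
end

section
/- Let M ≅ ℤⁿ be a lattice, σ ⊆ M ⊗ ℝ a rational polyhedral cone generated by finitely many lattice vectors, m₀ ∈ σ^∨ ∩ M* an element of the dual lattice pairing nonnegatively on σ, and let τ := σ ∩ {v : ⟨m₀, v⟩ = 0} be the corresponding face of σ. Then τ^∨ ∩ M* = (σ^∨ ∩ M*) + ℕ·(−m₀); that is, every element of the dual lattice pairing nonnegatively on τ can be written as u + j·(−m₀) with u ∈ σ^∨ ∩ M* and j ∈ ℕ, and conversely every such sum pairs nonnegatively on τ. -/
open scoped BigOperators

/-- The real pairing of an integral dual vector with a real vector. -/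
def pairR {d : ℕ} (u : Fin d → ℤ) (v : Fin d → ℝ) : ℝ := ∑ j, (u j : ℝ) * v j

lemma pairR_sum {d p : ℕ} (u : Fin d → ℤ) (c : Fin p → ℝ) (f : Fin p → (Fin d → ℝ)) :
    pairR u (∑ i, c i • f i) = ∑ i, c i * pairR u (f i) := by
  simp only [pairR, Finset.sum_apply, Pi.smul_apply, smul_eq_mul, Finset.mul_sum]
  rw [Finset.sum_comm]
  exact Finset.sum_congr rfl fun i _ => Finset.sum_congr rfl fun j _ => by ring

lemma pairR_int {d : ℕ} (u y : Fin d → ℤ) :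
    pairR u (fun j => (y j : ℝ)) = ((∑ j, u j * y j : ℤ) : ℝ) := by
  simp [pairR]

/-- Passing to the face `τ = σ ∩ m₀^⊥` of a rational polyhedral cone corresponds to
localizing the dual semigroup: `τ^∨ ∩ M* = (σ^∨ ∩ M*) + ℕ·(−m₀)`. -/
theorem stmt_12 (d : ℕ) (σ : Set (Fin d → ℝ)) (p : ℕ) (x : Fin p → (Fin d → ℤ))
    (hσ : σ = {v | ∃ c : Fin p → ℝ, (∀ i, 0 ≤ c i) ∧
      v = ∑ i, c i • (fun j => ((x i j : ℝ)))})
    (m₀ : Fin d → ℤ) (hm₀ : ∀ v ∈ σ, 0 ≤ pairR m₀ v)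
    (τ : Set (Fin d → ℝ)) (hτ : τ = σ ∩ {v | pairR m₀ v = 0}) :
    ∀ u : Fin d → ℤ,
      (∀ v ∈ τ, 0 ≤ pairR u v) ↔
      ∃ (w : Fin d → ℤ) (j : ℕ), (∀ v ∈ σ, 0 ≤ pairR w v) ∧ u = w + j • (-m₀) := by
  intro u
  constructor
  · intro hu
    -- generators belong to σ
    have hgen : ∀ i, (fun j => ((x i j : ℝ))) ∈ σ := by
      intro i
      rw [hσ]
      refine ⟨fun i' => if i' = i then 1 else 0, fun i' => by positivity, ?_⟩
      funext j
      simp [Finset.sum_apply, ite_smul, apply_ite (fun f : Fin d → ℝ => f j),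
        Finset.sum_ite_eq']
    set A : Fin p → ℤ := fun i => ∑ j, m₀ j * x i j with hA
    set B : Fin p → ℤ := fun i => ∑ j, u j * x i j with hB
    have hApos : ∀ i, 0 ≤ A i := by
      intro i
      have := hm₀ _ (hgen i)
      rw [pairR_int] at this
      exact_mod_cast this
    -- choose j
    set J : ℕ := ∑ i, (-(B i)).toNat with hJ
    have hkey : ∀ i, 0 ≤ B i + (J : ℤ) * A i := by
      intro i
      rcases lt_or_eq_of_le (hApos i) with hpos | hzero
      · have hJi : ((-(B i)).toNat : ℤ) ≤ (J : ℤ) := by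
          exact_mod_cast Finset.single_le_sum (f := fun i => (-(B i)).toNat)
            (fun _ _ => Nat.zero_le _) (Finset.mem_univ i)
        have h1 : (1 : ℤ) ≤ A i := hpos
        nlinarith [Int.self_le_toNat (-(B i))]
      · -- A i = 0, so generator is in τ
        have hmem : (fun j => ((x i j : ℝ))) ∈ τ := by
          rw [hτ]
          refine ⟨hgen i, ?_⟩
          show pairR m₀ _ = 0
          rw [pairR_int]
          exact_mod_cast hzero.symm
        have := hu _ hmem
        rw [pairR_int] at this
        have hBnn : (0 : ℤ) ≤ B i := by exact_mod_cast this
        rw [← hzero]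
        simpa using hBnn
    refine ⟨u + J • m₀, J, ?_, ?_⟩
    · intro v hv
      rw [hσ] at hv
      obtain ⟨c, hc, rfl⟩ := hv
      rw [pairR_sum]
      apply Finset.sum_nonneg
      intro i _
      apply mul_nonneg (hc i)
      rw [pairR_int]
      have : (∑ j, (u + J • m₀) j * x i j) = B i + (J : ℤ) * A i := by
        simp only [Pi.add_apply, Pi.smul_apply, smul_eq_mul, hB, hA, add_mul,
          Finset.sum_add_distrib, Finset.mul_sum]
        congr 1
        exact Finset.sum_congr rfl fun k _ => by ring
      rw [this]
      exact_mod_cast hkey i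
    · funext k
      simp only [Pi.add_apply, Pi.smul_apply, Pi.neg_apply, smul_eq_mul]
      ring
  · rintro ⟨w, j, hw, rfl⟩
    intro v hv
    rw [hτ] at hv
    obtain ⟨hvσ, hv0⟩ := hv
    have h0 : pairR m₀ v = 0 := hv0
    have : pairR (w + j • (-m₀)) v = pairR w v - (j : ℝ) * pairR m₀ v := by
      simp only [pairR, Finset.mul_sum]
      rw [← Finset.sum_sub_distrib]
      refine Finset.sum_congr rfl fun k _ => ?_
      have h : (((w + j • (-m₀)) k : ℤ) : ℝ) = (w k : ℝ) - (j : ℝ) * (m₀ k : ℝ) := by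
        simp only [Pi.add_apply, Pi.smul_apply, Pi.neg_apply, nsmul_eq_mul, Pi.mul_apply,
          Pi.natCast_apply]
        push_cast
        ring
      rw [h]
      ring
    rw [this, h0]
    simpa using hw v hvσ
end
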